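/- Let k be a field of prime characteristic p, and let M be a left module over the Weyl algebra W₁(k) = k⟨x,y⟩ with [x,y] = 1. Then M = x^{p−1}·M + y·M. -/
import Mathlib


/-- The relation defining the first Weyl algebra: `x * y = y * x + 1`,
where `x = ι 0`, `y = ι 1`. -/
inductive WeylRel (R : Type*) [CommRing R] :
    FreeAlgebra R (Fin 2) → FreeAlgebra R (Fin 2) → Prop
  | weyl : WeylRel R (FreeAlgebra.ι R 0 * FreeAlgebra.ι R 1)
      (FreeAlgebra.ι R 1 * FreeAlgebra.ι R 0 + 1)

/-- The first Weyl algebra `W₁(R)` over a commutative ring `R`. -/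
abbrev Weyl (R : Type*) [CommRing R] := RingQuot (WeylRel R)

noncomputable def Weyl.x (R : Type*) [CommRing R] : Weyl R :=
  RingQuot.mkAlgHom R (WeylRel R) (FreeAlgebra.ι R 0)

noncomputable def Weyl.y (R : Type*) [CommRing R] : Weyl R :=
  RingQuot.mkAlgHom R (WeylRel R) (FreeAlgebra.ι R 1)

open Polynomial

section Aux

variable (k : Type*) [CommRing k]

lemma weyl_xy : Weyl.x k * Weyl.y k = Weyl.y k * Weyl.x k + 1 := by
  have h := RingQuot.mkAlgHom_rel k (WeylRel.weyl (R := k))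
  simpa [Weyl.x, Weyl.y, map_mul, map_add, map_one] using h

lemma weyl_xh : Weyl.x k * (Weyl.y k * Weyl.x k)
    = (Weyl.y k * Weyl.x k + 1) * Weyl.x k := by
  rw [← mul_assoc, weyl_xy]

lemma weyl_x_pow_h (n : ℕ) :
    Weyl.x k * (Weyl.y k * Weyl.x k) ^ n
      = (Weyl.y k * Weyl.x k + 1) ^ n * Weyl.x k := by
  induction n with
  | zero => simp
  | succ n ih =>
      rw [pow_succ', ← mul_assoc, weyl_xh, mul_assoc, ih, ← mul_assoc, ← pow_succ']

lemma weyl_x_aeval (q : k[X]) :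
    Weyl.x k * aeval (Weyl.y k * Weyl.x k) q
      = aeval (Weyl.y k * Weyl.x k) (q.comp (X + 1)) * Weyl.x k := by
  induction q using Polynomial.induction_on' with
  | add p q hp hq => rw [map_add, mul_add, hp, hq, add_comp, map_add, add_mul]
  | monomial n a =>
      rw [aeval_monomial, ← mul_assoc, ← Algebra.commutes, mul_assoc, weyl_x_pow_h,
        ← mul_assoc]
      congr 1
      rw [← C_mul_X_pow_eq_monomial, mul_comp, C_comp, pow_comp, X_comp, map_mul,
        aeval_C, map_pow]
      simp

/-- The polynomial `∏_{i=1}^n (X + i)`. -/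
noncomputable def weylP (n : ℕ) : k[X] :=
  ∏ i ∈ Finset.range n, (X + C ((i + 1 : ℕ) : k))

lemma weyl_pow_eq (n : ℕ) :
    Weyl.x k ^ n * Weyl.y k ^ n = aeval (Weyl.y k * Weyl.x k) (weylP k n) := by
  induction n with
  | zero => simp [weylP]
  | succ n ih =>
      have hP : weylP k (n + 1) = (weylP k n).comp (X + 1) * (X + C (1 : k)) := by
        rw [weylP, Finset.prod_range_succ', weylP, prod_comp]
        congr 1
        · refine Finset.prod_congr rfl fun i _ => ?_
          rw [add_comp, X_comp, C_comp]
          push_cast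
          rw [show ((i : k) + 1 + 1) = 1 + ((i : k) + 1) by ring, C_add, C_1]
          ring
        · push_cast
          ring
      have : Weyl.x k ^ (n + 1) * Weyl.y k ^ (n + 1)
          = Weyl.x k * (Weyl.x k ^ n * Weyl.y k ^ n) * Weyl.y k := by
        rw [pow_succ', pow_succ]; simp only [mul_assoc]
      rw [this, ih, weyl_x_aeval, hP, map_mul, mul_assoc]
      congr 1
      rw [map_add, aeval_X, aeval_C, map_one]
      exact weyl_xy k

end Aux

/-- For a field `k` of prime characteristic `p` and any left `W₁(k)`-module `M`,
`M = x^{p-1}·M + y·M`. -/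
theorem weyl_module_eq (k : Type*) [Field k] (p : ℕ) [Fact p.Prime] [CharP k p]
    (M : Type*) [AddCommGroup M] [Module (Weyl k) M] :
    ∀ m : M, ∃ m₁ m₂ : M, m = ((Weyl.x k) ^ (p - 1)) • m₁ + (Weyl.y k) • m₂ := by
  intro m
  set q : k[X] := weylP k (p - 1) with hq
  -- constant coefficient of q is (p-1)! = -1
  have hcoeff : q.coeff 0 = -1 := by
    rw [hq, coeff_zero_eq_eval_zero, weylP, eval_prod]
    simp only [eval_add, eval_X, eval_C, zero_add]
    have : (∏ i ∈ Finset.range (p - 1), (((i + 1 : ℕ) : k)))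
        = ((Nat.factorial (p - 1) : ℕ) : k) := by
      rw [← Nat.cast_prod]
      congr 1
      exact Finset.prod_range_add_one_eq_factorial (p - 1)
    rw [this]
    have hz : ((Nat.factorial (p - 1) : ℕ) : ZMod p) = -1 := ZMod.wilsons_lemma p
    calc ((Nat.factorial (p - 1) : ℕ) : k)
        = ZMod.castHom (dvd_refl p) k ((Nat.factorial (p - 1) : ℕ) : ZMod p) := by
          rw [map_natCast]
      _ = -1 := by rw [hz, map_neg, map_one]
  have key : Weyl.x k ^ (p - 1) * Weyl.y k ^ (p - 1)
      = Weyl.y k * (Weyl.x k * aeval (Weyl.y k * Weyl.x k) q.divX) - 1 := by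
    rw [weyl_pow_eq, ← hq]
    conv_lhs => rw [← Polynomial.X_mul_divX_add q]
    rw [map_add, map_mul, aeval_X, aeval_C, hcoeff, map_neg, map_one, mul_assoc,
      sub_eq_add_neg]
  refine ⟨-(Weyl.y k ^ (p - 1) • m), (Weyl.x k * aeval (Weyl.y k * Weyl.x k) q.divX) • m, ?_⟩
  have one : Weyl.y k * (Weyl.x k * aeval (Weyl.y k * Weyl.x k) q.divX) - Weyl.x k ^ (p - 1) * Weyl.y k ^ (p - 1) = 1 := by
    rw [key, sub_sub_cancel]
  have hm : m = (Weyl.y k * (Weyl.x k * aeval (Weyl.y k * Weyl.x k) q.divX)) • m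
      - (Weyl.x k ^ (p - 1) * Weyl.y k ^ (p - 1)) • m := by
    rw [← sub_smul, one, one_smul]
  rw [smul_neg, ← mul_smul, ← mul_smul]
  conv_lhs => rw [hm]
  abel
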